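/- (Random attractor theorem) Let φ be a random dynamical system on a separable Banach space H over an ergodic metric dynamical system (Ω, F, ℙ, (θ_t)_{t∈ℝ}) such that x ↦ φ(t,ω,x) is continuous for each t and ω. Suppose there exists a random set B = {B(ω)} consisting of compact nonempty sets that is forward invariant (φ(t,ω,B(ω)) ⊆ B(θ_tω) for t > 0), has subexponential growth, and is absorbing: for every random set D of bounded sets with subexponential growth there exists t₀(D,ω) such that φ(t,ω,D(ω)) ⊆ B(θ_tω) and φ(t,θ_{−t}ω,D(θ_{−t}ω)) ⊆ B(ω) for all t ≥ t₀(D,ω). Then φ has a random global attractor: a random set A = {A(ω)} of compact nonempty sets satisfying the invariance φ(t,ω,A(ω)) = A(θ_tω) for all t ≥ 0 and ω ∈ Ω, and the attraction property that for every random bounded set D, dist_H(φ(t,ω,D(ω)), A(θ_tω)) → 0 in probability as t → ∞, where dist_H(E,F) = sup_{x∈E} inf_{y∈F} ‖x − y‖. -/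

import Mathlib

set_option linter.unusedSectionVars false

open Filter MeasureTheory

section AuxLemmas
open Metric EMetric ENNReal Set TopologicalSpace

variable {X : Type*} [NormedAddCommGroup X] [NormedSpace ℝ X]

private lemma aux_cluster {K : ℕ → Set X} (hcpt : ∀ n, IsCompact (K n))
    (hanti : Antitone K) {z : ℕ → X} (hz : ∀ n, z n ∈ K n) :
    ∃ a ∈ ⋂ n, K n, ∃ g : ℕ → ℕ, StrictMono g ∧
      Tendsto (z ∘ g) atTop (nhds a) := by
  obtain ⟨a, _, g, hg, hga⟩ :=
    (hcpt 0).tendsto_subseq (fun n => hanti (Nat.zero_le n) (hz n))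
  refine ⟨a, ?_, g, hg, hga⟩
  refine Set.mem_iInter.mpr fun m => ?_
  refine (hcpt m).isClosed.mem_of_tendsto hga ?_
  filter_upwards [eventually_ge_atTop m] with i hi
  exact hanti (le_trans hi hg.le_apply) (hz (g i))

private lemma aux_far_fin {K : Set X} (h : Bornology.IsBounded K) (y : X) :
    (⨆ x ∈ K, (‖x - y‖₊ : ENNReal)) ≠ ⊤ := by
  obtain ⟨r, hr⟩ := h.subset_closedBall y
  refine ne_top_of_le_ne_top (ofReal_ne_top (r := r)) (iSup₂_le fun x hx => ?_)
  have h1 : ‖x - y‖ ≤ r := by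
    have := hr hx
    rwa [Metric.mem_closedBall, dist_eq_norm] at this
  rw [← enorm_eq_nnnorm, ← ofReal_norm]
  exact ENNReal.ofReal_le_ofReal h1

private lemma aux_nonempty_iInter {K : ℕ → Set X} (hcpt : ∀ n, IsCompact (K n))
    (hne : ∀ n, (K n).Nonempty) (hanti : Antitone K) : (⋂ n, K n).Nonempty :=
  IsCompact.nonempty_iInter_of_sequence_nonempty_isCompact_isClosed K
    (fun n => hanti (Nat.le_succ n)) hne (hcpt 0) fun n => (hcpt n).isClosed

private lemma aux_image_iInter {Y : Type*} [TopologicalSpace Y] [T2Space Y] {f : X → Y}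
    (hf : Continuous f) {K : ℕ → Set X} (hcpt : ∀ n, IsCompact (K n))
    (hne : ∀ n, (K n).Nonempty) (hanti : Antitone K) :
    f '' (⋂ n, K n) = ⋂ n, f '' K n := by
  apply Set.Subset.antisymm
  · exact Set.subset_iInter fun n => Set.image_mono (Set.iInter_subset K n)
  · intro y hy
    have hC : ∀ n, (K n ∩ f ⁻¹' {y}).Nonempty := fun n => by
      obtain ⟨x, hx, hfx⟩ := (Set.mem_iInter.mp hy n : y ∈ f '' K n)
      exact ⟨x, hx, by simp [hfx]⟩
    have hclosed : ∀ n, IsClosed (K n ∩ f ⁻¹' {y}) := fun n =>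
      (hcpt n).isClosed.inter (isClosed_singleton.preimage hf)
    obtain ⟨x, hx⟩ := IsCompact.nonempty_iInter_of_sequence_nonempty_isCompact_isClosed
      (fun n => K n ∩ f ⁻¹' {y})
      (fun n => Set.inter_subset_inter_left _ (hanti (Nat.le_succ n)))
      hC ((hcpt 0).inter_right (isClosed_singleton.preimage hf)) hclosed
    have hxK : x ∈ ⋂ n, K n := Set.mem_iInter.mpr fun n => (Set.mem_iInter.mp hx n).1
    have hfx : f x = y := (Set.mem_iInter.mp hx 0).2
    exact ⟨x, hxK, hfx⟩

private lemma aux_far_iInter {K : ℕ → Set X} (hcpt : ∀ n, IsCompact (K n))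
    (hne : ∀ n, (K n).Nonempty) (hanti : Antitone K) (y : X) :
    ⨅ n, ⨆ x ∈ K n, (‖x - y‖₊ : ENNReal) = ⨆ x ∈ ⋂ n, K n, (‖x - y‖₊ : ENNReal) := by
  refine le_antisymm ?_ (le_iInf fun n => iSup₂_le fun x hx =>
    le_iSup₂ (f := fun x (_ : x ∈ K n) => (‖x - y‖₊ : ENNReal)) x (Set.mem_iInter.mp hx n))
  set b := ⨆ x ∈ ⋂ n, K n, (‖x - y‖₊ : ENNReal) with hb
  have hbfin : b ≠ ⊤ :=
    aux_far_fin ((hcpt 0).isBounded.subset (Set.iInter_subset K 0)) y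
  refine ENNReal.le_of_forall_pos_le_add fun ε hε _ => ?_
  by_contra hc
  push_neg at hc
  have h2 : ∀ n, ∃ x, x ∈ K n ∧ b + ε < (‖x - y‖₊ : ENNReal) := fun n => by
    have h1 : b + ε < ⨆ x ∈ K n, (‖x - y‖₊ : ENNReal) := hc.trans_le (iInf_le _ n)
    simpa [lt_iSup_iff] using h1
  choose z hzK hzlt using h2
  obtain ⟨a, haA, g, hg, hga⟩ := aux_cluster hcpt hanti hzK
  have htend : Tendsto (fun i => (‖z (g i) - y‖₊ : ENNReal)) atTop
      (nhds (‖a - y‖₊ : ENNReal)) := by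
    have h3 : Tendsto (fun i => z (g i) - y) atTop (nhds (a - y)) :=
      hga.sub_const y
    exact (ENNReal.continuous_coe.tendsto _).comp
      ((continuous_nnnorm.tendsto _).comp h3)
  have h4 : b + ε ≤ (‖a - y‖₊ : ENNReal) :=
    ge_of_tendsto htend (Eventually.of_forall fun i => (hzlt (g i)).le)
  have h5 : (‖a - y‖₊ : ENNReal) ≤ b :=
    le_iSup₂ (f := fun x (_ : x ∈ ⋂ n, K n) => (‖x - y‖₊ : ENNReal)) a haA
  exact absurd (h4.trans h5)
    (not_le.mpr (ENNReal.lt_add_right hbfin (by exact_mod_cast hε.ne')))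

private lemma aux_infEdist_iInter {K : ℕ → Set X} (hcpt : ∀ n, IsCompact (K n))
    (hne : ∀ n, (K n).Nonempty) (hanti : Antitone K) (x : X) :
    ⨆ n, infEdist x (K n) = infEdist x (⋂ n, K n) := by
  refine le_antisymm (iSup_le fun n => infEdist_anti (Set.iInter_subset K n)) ?_
  have h2 : ∀ n, ∃ z ∈ K n, infEdist x (K n) = edist x z := fun n =>
    (hcpt n).exists_infEdist_eq_edist (hne n) x
  choose z hzK hzE using h2
  obtain ⟨a, haA, g, hg, hga⟩ := aux_cluster hcpt hanti hzK
  have h3 : infEdist x (⋂ n, K n) ≤ edist x a := infEdist_le_edist_of_mem haA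
  have htend : Tendsto (fun i => edist x (z (g i))) atTop (nhds (edist x a)) :=
    tendsto_const_nhds.edist hga
  have h4 : edist x a ≤ ⨆ n, infEdist x (K n) :=
    le_of_tendsto htend (Eventually.of_forall fun i => by
      rw [← hzE (g i)]; exact le_iSup (fun n => infEdist x (K n)) (g i))
  exact h3.trans h4

private lemma aux_unif {K : ℕ → Set X} (hcpt : ∀ n, IsCompact (K n))
    (hne : ∀ n, (K n).Nonempty) (hanti : Antitone K) {δ : ENNReal} (hδ : 0 < δ) :
    ∃ n, ∀ x ∈ K n, infEdist x (⋂ m, K m) ≤ δ := by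
  by_contra hc
  push_neg at hc
  choose z hzK hzlt using hc
  obtain ⟨a, haA, g, hg, hga⟩ := aux_cluster hcpt hanti hzK
  have h0 : infEdist a (⋂ m, K m) = 0 := infEdist_zero_of_mem haA
  have htend : Tendsto (fun i => infEdist (z (g i)) (⋂ m, K m)) atTop (nhds 0) := by
    rw [← h0]
    exact (continuous_infEdist.tendsto a).comp hga
  have h5 := ge_of_tendsto htend (Eventually.of_forall fun i => (hzlt (g i)).le)
  exact absurd h5 (by simpa using hδ.not_ge)

private lemma aux_ball_induction [SeparableSpace X] {R : ℝ} (hR : 0 < R)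
    {P : X → Prop} (hP : IsClosed {z | P z})
    (hq : ∀ k : ℕ, ‖denseSeq X k‖ < R → P (denseSeq X k)) :
    ∀ z ∈ closedBall (0 : X) R, P z := by
  haveI : Nonempty X := ⟨0⟩
  intro z hz
  have h1 : Metric.ball (0 : X) R ⊆
      closure (Metric.ball (0 : X) R ∩ Set.range (denseSeq X)) :=
    (denseRange_denseSeq X).open_subset_closure_inter isOpen_ball
  have h2 : closedBall (0 : X) R ⊆ {z | P z} := by
    rw [← closure_ball (0 : X) hR.ne']
    refine (closure_mono h1).trans ?_
    rw [closure_closure]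
    refine closure_minimal ?_ hP
    rintro w ⟨hwball, k, rfl⟩
    exact hq k (by simpa [mem_ball_zero_iff] using hwball)
  exact h2 hz

private lemma aux_farBall_eq [SeparableSpace X] {R : ℝ} (hR : 0 < R) (y : X) :
    (⨆ x ∈ closedBall (0 : X) R, (‖x - y‖₊ : ENNReal))
      = ⨆ k : ℕ, if ‖denseSeq X k‖ < R then (‖denseSeq X k - y‖₊ : ENNReal) else 0 := by
  haveI : Nonempty X := ⟨0⟩
  classical
  refine le_antisymm ?_ ?_
  · refine iSup₂_le fun x hx => ?_
    refine aux_ball_induction hR ?_ ?_ x hx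
      (P := fun z => (‖z - y‖₊ : ENNReal) ≤
        ⨆ k : ℕ, if ‖denseSeq X k‖ < R then (‖denseSeq X k - y‖₊ : ENNReal) else 0)
    · exact isClosed_le
        (ENNReal.continuous_coe.comp (continuous_nnnorm.comp
          (continuous_id.sub continuous_const))) continuous_const
    · intro k hk
      have := le_iSup (fun k : ℕ =>
        if ‖denseSeq X k‖ < R then (‖denseSeq X k - y‖₊ : ENNReal) else 0) k
      rwa [if_pos hk] at this
  · refine iSup_le fun k => ?_
    by_cases hk : ‖denseSeq X k‖ < R
    · rw [if_pos hk]
      refine le_iSup₂ (f := fun x (_ : x ∈ closedBall (0:X) R) => (‖x - y‖₊ : ENNReal))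
        (denseSeq X k) ?_
      simpa [Metric.mem_closedBall, dist_zero_right] using hk.le
    · rw [if_neg hk]; exact zero_le

private lemma aux_sInf_image {F : Set X} (x : X) :
    sInf ((fun y => ‖x - y‖) '' F) = Metric.infDist x F := by
  rw [Metric.infDist_eq_iInf]
  have h1 : (fun y => ‖x - y‖) '' F = (fun y => dist x y) '' F := by
    simp [dist_eq_norm]
  rw [h1, Set.image_eq_range]
  rfl

end AuxLemmas

open Filter MeasureTheory

/-- **Random attractor theorem.**
Let `φ` be a continuous random dynamical system on a separable Banach space `H`
over an ergodic metric dynamical system `(Ω, F, ℙ, (θ_t))`. If there exists a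
compact, forward-invariant, absorbing random set `B` of subexponential growth,
then `φ` has a random global attractor `A`: a random family of compact nonempty
sets with `φ(t,ω,A(ω)) = A(θ_t ω)` which attracts every random bounded set in
probability, with respect to the one-sided Hausdorff semidistance
`dist_H(E,F) = sup_{x∈E} inf_{y∈F} ‖x − y‖`. -/
theorem random_attractor_theorem
    {Ω : Type*} [MeasurableSpace Ω] (ℙ : Measure Ω) [IsProbabilityMeasure ℙ]
    {H : Type*} [NormedAddCommGroup H] [NormedSpace ℝ H] [CompleteSpace H]
    [TopologicalSpace.SeparableSpace H] [MeasurableSpace H] [BorelSpace H]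
    -- the driving ergodic metric dynamical system
    (θ : ℝ → Ω → Ω)
    (hθ_meas : Measurable fun p : ℝ × Ω => θ p.1 p.2)
    (hθ_zero : θ 0 = id)
    (hθ_flow : ∀ t τ : ℝ, θ (t + τ) = θ t ∘ θ τ)
    (hθ_mp : ∀ t : ℝ, MeasurePreserving (θ t) ℙ ℙ)
    (hθ_erg : ∀ A : Set Ω, MeasurableSet A → (∀ t : ℝ, θ t ⁻¹' A = A) →
      ℙ A = 0 ∨ ℙ A = 1)
    -- the cocycle φ, continuous in the space variable
    (φ : ℝ → Ω → H → H)
    (hφ_meas : Measurable fun p : ℝ × Ω × H => φ p.1 p.2.1 p.2.2)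
    (hφ_zero : ∀ (ω : Ω) (x : H), φ 0 ω x = x)
    (hφ_cocycle : ∀ t τ : ℝ, 0 ≤ t → 0 ≤ τ → ∀ (ω : Ω) (x : H),
      φ (t + τ) ω x = φ t (θ τ ω) (φ τ ω x))
    (hφ_cont : ∀ (t : ℝ) (ω : Ω), Continuous fun x : H => φ t ω x)
    -- the one-sided Hausdorff semidistance
    (distH : Set H → Set H → ℝ)
    (hdistH : ∀ E F : Set H,
      distH E F = sSup ((fun x => sInf ((fun y => ‖x - y‖) '' F)) '' E))
    -- the compact absorbing random set B
    (B : Ω → Set H)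
    (hB_ne : ∀ ω, (B ω).Nonempty)
    (hB_compact : ∀ ω, IsCompact (B ω))
    (hB_meas : ∀ y : H, Measurable fun ω => ⨆ x ∈ B ω, (‖x - y‖₊ : ENNReal))
    (hB_inv : ∀ t : ℝ, 0 < t → ∀ ω, φ t ω '' B ω ⊆ B (θ t ω))
    (hB_subexp : ∀ᵐ ω ∂ℙ, ∀ ε : ℝ, 0 < ε → ∃ M : ℝ, 0 < M ∧
      ∀ t : ℝ, M ≤ |t| → ∀ x ∈ B (θ t ω), ‖x‖ ≤ Real.exp (ε * |t|))
    (hB_absorb : ∀ D : Ω → Set H, (∀ ω, Bornology.IsBounded (D ω)) →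
      (∀ y : H, Measurable fun ω => ⨆ x ∈ D ω, (‖x - y‖₊ : ENNReal)) →
      (∀ᵐ ω ∂ℙ, ∀ ε : ℝ, 0 < ε → ∃ M : ℝ, 0 < M ∧
        ∀ t : ℝ, M ≤ |t| → ∀ x ∈ D (θ t ω), ‖x‖ ≤ Real.exp (ε * |t|)) →
      ∀ ω : Ω, ∃ t₀ : ℝ, 0 < t₀ ∧ ∀ t : ℝ, t₀ ≤ t →
        φ t ω '' D ω ⊆ B (θ t ω) ∧
        φ t (θ (-t) ω) '' D (θ (-t) ω) ⊆ B ω) :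
    -- conclusion: existence of a random global attractor
    ∃ A : Ω → Set H,
      (∀ ω, (A ω).Nonempty) ∧
      (∀ ω, IsCompact (A ω)) ∧
      (∀ y : H, Measurable fun ω => ⨆ x ∈ A ω, (‖x - y‖₊ : ENNReal)) ∧
      (∀ t : ℝ, 0 ≤ t → ∀ ω, φ t ω '' A ω = A (θ t ω)) ∧
      (∀ D : Ω → Set H, (∀ ω, Bornology.IsBounded (D ω)) →
        (∀ y : H, Measurable fun ω => ⨆ x ∈ D ω, (‖x - y‖₊ : ENNReal)) →
        ∀ ε : ℝ, 0 < ε →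
          Tendsto (fun t : ℝ =>
              ℙ {ω : Ω | ε ≤ distH (φ t ω '' D ω) (A (θ t ω))})
            atTop (nhds 0)) := by
  classical
  -- basic nonemptiness and topology facts
  have hΩne : Nonempty Ω := by
    by_contra h
    have h1 : (ℙ : Measure Ω) Set.univ = 1 := measure_univ
    rw [Set.univ_eq_empty_iff.mpr (not_nonempty_iff.mp h)] at h1
    simp at h1
  haveI : Nonempty H := ⟨(hB_ne (Classical.arbitrary Ω)).some⟩
  haveI : SecondCountableTopology H := UniformSpace.secondCountable_of_separable H
  -- θ basics
  have hθθ : ∀ (a b : ℝ) (ω : Ω), θ a (θ b ω) = θ (a + b) ω := by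
    intro a b ω
    rw [hθ_flow a b]
    rfl
  have hθ0 : ∀ ω : Ω, θ 0 ω = ω := fun ω => by rw [hθ_zero]; rfl
  have hθmeas : ∀ c : ℝ, Measurable (θ c) := fun c =>
    hθ_meas.comp (measurable_const.prodMk measurable_id)
  have hφθmeas : ∀ (t c : ℝ) (v : H), Measurable fun ω => φ t (θ c ω) v :=
    fun t c v => hφ_meas.comp
      (measurable_const.prodMk ((hθmeas c).prodMk measurable_const))
  set q : ℕ → H := TopologicalSpace.denseSeq H with hqdef
  -- the pullback sets K s ω
  set K : ℝ → Ω → Set H := fun s ω => φ s (θ (-s) ω) '' B (θ (-s) ω) with hKdef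
  have hKcpt : ∀ (s : ℝ) (ω : Ω), IsCompact (K s ω) := fun s ω =>
    (hB_compact _).image (hφ_cont _ _)
  have hKne : ∀ (s : ℝ) (ω : Ω), (K s ω).Nonempty := fun s ω =>
    (hB_ne _).image _
  have hK0 : ∀ ω : Ω, K 0 ω = B ω := by
    intro ω
    show φ 0 (θ (-0) ω) '' B (θ (-0) ω) = B ω
    rw [neg_zero, hθ0]
    ext x
    simp [hφ_zero]
  -- the key absorption-into-K lemma
  have key : ∀ (s u : ℝ), 0 ≤ s → 0 ≤ u → ∀ (ω : Ω) (E : Set H),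
      φ u (θ (-(s+u)) ω) '' E ⊆ B (θ (-s) ω) →
      φ (s+u) (θ (-(s+u)) ω) '' E ⊆ K s ω := by
    intro s u hs hu ω E hE
    rintro - ⟨x, hxE, rfl⟩
    have harg : u + -(s+u) = -s := by ring
    have h1 : φ (s+u) (θ (-(s+u)) ω) x
        = φ s (θ (-s) ω) (φ u (θ (-(s+u)) ω) x) := by
      rw [hφ_cocycle s u hs hu, hθθ, harg]
    rw [h1]
    exact Set.mem_image_of_mem _ (hE (Set.mem_image_of_mem _ hxE))
  -- monotonicity of K
  have hKmono : ∀ (ω : Ω) (s s' : ℝ), 0 ≤ s → s ≤ s' → K s' ω ⊆ K s ω := by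
    intro ω s s' hs hss'
    rcases eq_or_lt_of_le hss' with h | h
    · rw [← h]
    · have hu : (0:ℝ) < s' - s := by linarith
      have hsum : s + (s' - s) = s' := by ring
      have h2 := key s (s' - s) hs hu.le ω (B (θ (-(s + (s' - s))) ω)) ?_
      · rwa [hsum] at h2
      · have h3 := hB_inv (s' - s) hu (θ (-(s + (s' - s))) ω)
        rwa [hθθ, show s' - s + -(s + (s' - s)) = -s by ring] at h3
  -- the attractor
  set A : Ω → Set H := fun ω => ⋂ n : ℕ, K (n : ℝ) ω with hAdef
  have hanti : ∀ ω : Ω, Antitone fun n : ℕ => K (n : ℝ) ω := fun ω a b hab =>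
    hKmono ω _ _ (Nat.cast_nonneg a) (Nat.cast_le.mpr hab)
  have hAcpt : ∀ ω, IsCompact (A ω) := by
    intro ω
    have hclosed : IsClosed (A ω) :=
      isClosed_iInter fun n => (hKcpt _ _).isClosed
    exact (hKcpt 0 ω).of_isClosed_subset hclosed
      (by simpa using Set.iInter_subset (fun n : ℕ => K (n : ℝ) ω) 0)
  have hAne : ∀ ω, (A ω).Nonempty := fun ω =>
    aux_nonempty_iInter (fun n => hKcpt _ _) (fun n => hKne _ _) (hanti ω)
  have hAsubK : ∀ (ω : Ω) (n : ℕ), A ω ⊆ K (n : ℝ) ω := fun ω n =>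
    Set.iInter_subset _ n

  -- the measurable radius of B, and the ball hull of B
  set farB0 : Ω → ENNReal := fun ω => ⨆ x ∈ B ω, (‖x‖₊ : ENNReal) with hfarB0def
  have hfarB0_meas : Measurable farB0 := by
    have h1 := hB_meas 0
    simpa [sub_zero] using h1
  have hfarB0_fin : ∀ ω, farB0 ω ≠ ⊤ := by
    intro ω
    have := aux_far_fin (hB_compact ω).isBounded (0 : H)
    simpa [sub_zero] using this
  set ρB : Ω → ℝ := fun ω => (farB0 ω).toReal + 1 with hρBdef
  have hρB_meas : Measurable ρB :=
    (ENNReal.measurable_toReal.comp hfarB0_meas).add measurable_const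
  have hρB_pos : ∀ ω, 0 < ρB ω := fun ω => by
    have : (0:ℝ) ≤ (farB0 ω).toReal := ENNReal.toReal_nonneg
    simp only [hρBdef]; linarith
  set Babs : Ω → Set H := fun ω => Metric.closedBall (0 : H) (ρB ω) with hBabsdef
  have hB_sub_Babs : ∀ ω, B ω ⊆ Babs ω := by
    intro ω x hx
    have h1 : (‖x‖₊ : ENNReal) ≤ farB0 ω :=
      le_iSup₂ (f := fun x (_ : x ∈ B ω) => (‖x‖₊ : ENNReal)) x hx
    have h2 : ‖x‖ ≤ (farB0 ω).toReal := by
      have := ENNReal.toReal_mono (hfarB0_fin ω) h1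
      simpa using this
    simp only [hBabsdef, Metric.mem_closedBall, dist_zero_right]
    simp only [hρBdef]; linarith
  have hBabs_bdd : ∀ ω, Bornology.IsBounded (Babs ω) := fun ω =>
    Metric.isBounded_closedBall
  have hBabs_meas : ∀ y : H, Measurable fun ω => ⨆ x ∈ Babs ω, (‖x - y‖₊ : ENNReal) := by
    intro y
    have heq : (fun ω => ⨆ x ∈ Babs ω, (‖x - y‖₊ : ENNReal))
        = fun ω => ⨆ k : ℕ, if ‖q k‖ < ρB ω then (‖q k - y‖₊ : ENNReal) else 0 := by
      funext ω
      exact aux_farBall_eq (hρB_pos ω) y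
    rw [heq]
    refine Measurable.iSup fun k => Measurable.ite ?_ measurable_const measurable_const
    exact measurableSet_lt measurable_const hρB_meas
  -- growth estimate for radii
  have hradius_sub : ∀ (ω : Ω) (ε : ℝ), 0 < ε →
      (∃ M : ℝ, 0 < M ∧ ∀ t : ℝ, M ≤ |t| → ∀ x ∈ B (θ t ω), ‖x‖ ≤ Real.exp ((ε/2) * |t|)) →
      ∃ M : ℝ, 0 < M ∧ ∀ t : ℝ, M ≤ |t| → ∀ x ∈ Babs (θ t ω), ‖x‖ ≤ Real.exp (ε * |t|) := by
    intro ω ε hε ⟨M, hM, hbound⟩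
    refine ⟨max M (2 * Real.log 2 / ε), lt_max_of_lt_left hM, ?_⟩
    intro t ht x hx
    have htM : M ≤ |t| := le_trans (le_max_left _ _) ht
    have htL : 2 * Real.log 2 / ε ≤ |t| := le_trans (le_max_right _ _) ht
    have hlog : Real.log 2 ≤ ε/2 * |t| := by
      rw [div_le_iff₀ hε] at htL
      nlinarith [Real.log_pos (by norm_num : (1:ℝ) < 2)]
    have h2e : (2:ℝ) ≤ Real.exp (ε/2 * |t|) := by
      calc (2:ℝ) = Real.exp (Real.log 2) := (Real.exp_log two_pos).symm
        _ ≤ Real.exp (ε/2 * |t|) := Real.exp_le_exp.mpr hlog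
    have hfar : (farB0 (θ t ω)).toReal ≤ Real.exp (ε/2 * |t|) := by
      refine ENNReal.toReal_le_of_le_ofReal (Real.exp_pos _).le ?_
      refine iSup₂_le fun z hz => ?_
      rw [← enorm_eq_nnnorm, ← ofReal_norm]
      exact ENNReal.ofReal_le_ofReal (hbound t htM z hz)
    have hxρ : ‖x‖ ≤ ρB (θ t ω) := by
      simpa [hBabsdef, Metric.mem_closedBall, dist_zero_right] using hx
    have hexp : Real.exp (ε/2 * |t|) + 1 ≤ Real.exp (ε * |t|) := by
      have h3 : Real.exp (ε * |t|) = Real.exp (ε/2 * |t|) * Real.exp (ε/2 * |t|) := by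
        rw [← Real.exp_add]; ring_nf
      nlinarith [Real.exp_pos (ε/2 * |t|)]
    have : ρB (θ t ω) ≤ Real.exp (ε * |t|) := by
      simp only [hρBdef]; linarith
    linarith
  have hBabs_subexp : ∀ᵐ ω ∂ℙ, ∀ ε : ℝ, 0 < ε → ∃ M : ℝ, 0 < M ∧
      ∀ t : ℝ, M ≤ |t| → ∀ x ∈ Babs (θ t ω), ‖x‖ ≤ Real.exp (ε * |t|) := by
    filter_upwards [hB_subexp] with ω hω
    intro ε hε
    exact hradius_sub ω ε hε (hω (ε/2) (half_pos hε))
  have habs := hB_absorb Babs hBabs_bdd hBabs_meas hBabs_subexp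
  -- K̂ₙ ⊆ K s for n large
  have hKhat_in_K : ∀ (ω : Ω) (s : ℝ), 0 ≤ s → ∃ N : ℕ, ∀ n : ℕ, N ≤ n →
      φ (n:ℝ) (θ (-(n:ℝ)) ω) '' Babs (θ (-(n:ℝ)) ω) ⊆ K s ω := by
    intro ω s hs
    obtain ⟨t₀, ht₀pos, ht₀⟩ := habs (θ (-s) ω)
    refine ⟨⌈s + t₀⌉₊, ?_⟩
    intro n hn
    have hn' : s + t₀ ≤ (n:ℝ) := le_trans (Nat.le_ceil _) (Nat.cast_le.mpr hn)
    set u : ℝ := (n:ℝ) - s with hudef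
    have hu0 : 0 ≤ u := by simp only [hudef]; linarith
    have hut₀ : t₀ ≤ u := by simp only [hudef]; linarith
    have hsum : s + u = (n:ℝ) := by simp only [hudef]; ring
    have habs2 := (ht₀ u hut₀).2
    rw [hθθ, show -u + -s = -(s+u) by ring] at habs2
    have h4 := key s u hs hu0 ω (Babs (θ (-(s+u)) ω)) habs2
    rw [hsum] at h4
    exact h4

  -- invariance
  have hKimg : ∀ (t : ℝ), 0 ≤ t → ∀ (ω : Ω) (n : ℕ),
      φ t ω '' K (n:ℝ) ω = K (t + n) (θ t ω) := by
    intro t ht ω n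
    have h1 : K (t + n) (θ t ω) = φ (t + n) (θ (-(n:ℝ)) ω) '' B (θ (-(n:ℝ)) ω) := by
      show φ (t+n) (θ (-(t+n)) (θ t ω)) '' B (θ (-(t+n)) (θ t ω)) = _
      rw [hθθ, show -(t + (n:ℝ)) + t = -(n:ℝ) by ring]
    rw [h1]
    show φ t ω '' (φ (n:ℝ) (θ (-(n:ℝ)) ω) '' B (θ (-(n:ℝ)) ω)) = _
    rw [Set.image_image]
    refine Set.image_congr fun x _ => ?_
    rw [hφ_cocycle t (n:ℝ) ht (Nat.cast_nonneg n) (θ (-(n:ℝ)) ω) x, hθθ,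
      show (n:ℝ) + -(n:ℝ) = 0 by ring, hθ0]
  have hAinv : ∀ t : ℝ, 0 ≤ t → ∀ ω, φ t ω '' A ω = A (θ t ω) := by
    intro t ht ω
    have h1 : φ t ω '' A ω = ⋂ n : ℕ, φ t ω '' K (n:ℝ) ω :=
      aux_image_iInter (hφ_cont t ω) (fun n => hKcpt _ _) (fun n => hKne _ _) (hanti ω)
    rw [h1]
    apply Set.Subset.antisymm
    · refine Set.subset_iInter fun m => ?_
      refine Set.Subset.trans (Set.iInter_subset _ m) ?_
      rw [hKimg t ht ω m]
      refine hKmono (θ t ω) _ _ (Nat.cast_nonneg m) (by linarith)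
    · refine Set.subset_iInter fun n => ?_
      rw [hKimg t ht ω n]
      have hm : t + (n:ℝ) ≤ ((⌈t⌉₊ + n : ℕ) : ℝ) := by
        push_cast
        linarith [Nat.le_ceil t]
      have h0 : (0:ℝ) ≤ t + n := by
        have := Nat.cast_nonneg (α := ℝ) n
        linarith
      refine Set.Subset.trans (Set.iInter_subset _ (⌈t⌉₊ + n)) ?_
      exact hKmono (θ t ω) _ _ h0 hm
  -- measurability of the farthest-distance function of A
  set FK : ℕ → H → Ω → ENNReal := fun n y ω => ⨆ k : ℕ,
      if ‖q k‖ < ρB (θ (-(n:ℝ)) ω) then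
        (‖φ (n:ℝ) (θ (-(n:ℝ)) ω) (q k) - y‖₊ : ENNReal) else 0 with hFKdef
  have hFK_meas : ∀ n y, Measurable (FK n y) := by
    intro n y
    refine Measurable.iSup fun k => Measurable.ite ?_ ?_ measurable_const
    · exact measurableSet_lt measurable_const (hρB_meas.comp (hθmeas _))
    · have hg : Measurable fun v : H => (‖v - y‖₊ : ENNReal) :=
        (ENNReal.continuous_coe.comp (continuous_nnnorm.comp
          (continuous_id.sub continuous_const))).measurable
      exact hg.comp (hφθmeas (n:ℝ) (-(n:ℝ)) (q k))
  have hfar_le_FK : ∀ (ω : Ω) (n : ℕ) (y : H),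
      (⨆ x ∈ A ω, (‖x - y‖₊ : ENNReal)) ≤ FK n y ω := by
    intro ω n y
    refine iSup₂_le fun x hx => ?_
    obtain ⟨z, hzB, rfl⟩ := hAsubK ω n hx
    have hz : z ∈ Metric.closedBall (0:H) (ρB (θ (-(n:ℝ)) ω)) := hB_sub_Babs _ hzB
    refine aux_ball_induction (hρB_pos _)
      (P := fun w => (‖φ (n:ℝ) (θ (-(n:ℝ)) ω) w - y‖₊ : ENNReal) ≤ FK n y ω) ?_ ?_ z hz
    · exact isClosed_le (ENNReal.continuous_coe.comp (continuous_nnnorm.comp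
        ((hφ_cont _ _).sub continuous_const))) continuous_const
    · intro k hk
      have h5 := le_iSup (fun k : ℕ => if ‖q k‖ < ρB (θ (-(n:ℝ)) ω) then
        (‖φ (n:ℝ) (θ (-(n:ℝ)) ω) (q k) - y‖₊ : ENNReal) else 0) k
      rwa [if_pos hk] at h5
  have hFK_le_farK : ∀ (ω : Ω) (s : ℝ), 0 ≤ s → ∃ N : ℕ, ∀ n : ℕ, N ≤ n → ∀ y : H,
      FK n y ω ≤ ⨆ x ∈ K s ω, (‖x - y‖₊ : ENNReal) := by
    intro ω s hs
    obtain ⟨N, hN⟩ := hKhat_in_K ω s hs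
    refine ⟨N, fun n hn y => ?_⟩
    refine iSup_le fun k => ?_
    by_cases hk : ‖q k‖ < ρB (θ (-(n:ℝ)) ω)
    · rw [if_pos hk]
      have hmem : φ (n:ℝ) (θ (-(n:ℝ)) ω) (q k) ∈ K s ω := by
        refine hN n hn (Set.mem_image_of_mem _ ?_)
        simpa [hBabsdef, Metric.mem_closedBall, dist_zero_right] using hk.le
      exact le_iSup₂ (f := fun x (_ : x ∈ K s ω) => (‖x - y‖₊ : ENNReal)) _ hmem
    · rw [if_neg hk]; exact zero_le
  have hA_meas : ∀ y : H, Measurable fun ω => ⨆ x ∈ A ω, (‖x - y‖₊ : ENNReal) := by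
    intro y
    have heq : (fun ω => ⨆ x ∈ A ω, (‖x - y‖₊ : ENNReal))
        = fun ω => ⨅ n : ℕ, FK n y ω := by
      funext ω
      refine le_antisymm (le_iInf fun n => hfar_le_FK ω n y) ?_
      have hKeq : ⨅ s : ℕ, ⨆ x ∈ K (s:ℝ) ω, (‖x - y‖₊ : ENNReal)
          = ⨆ x ∈ A ω, (‖x - y‖₊ : ENNReal) :=
        aux_far_iInter (fun n => hKcpt _ _) (fun n => hKne _ _) (hanti ω) y
      rw [← hKeq]
      refine le_iInf fun s => ?_
      obtain ⟨N, hN⟩ := hFK_le_farK ω (s:ℝ) (Nat.cast_nonneg s)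
      exact (iInf_le _ N).trans (hN N le_rfl y)
    rw [heq]
    exact Measurable.iInf fun n => hFK_meas n y

  -- pointwise distance to A as a countable measurable formula
  set eK : ℕ → Ω → H → ENNReal := fun n σ x => ⨅ k : ℕ,
      if ‖q k‖ < ρB (θ (-(n:ℝ)) σ) then
        edist (φ (n:ℝ) (θ (-(n:ℝ)) σ) (q k)) x else ⊤ with heKdef
  set dA : Ω → H → ENNReal := fun σ x => ⨆ n : ℕ, eK n σ x with hdAdef
  have heK_le : ∀ (σ : Ω) (x : H) (n : ℕ), eK n σ x ≤ EMetric.infEdist x (A σ) := by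
    intro σ x n
    obtain ⟨a, haA, hax⟩ := (hAcpt σ).exists_infEdist_eq_edist (hAne σ) x
    obtain ⟨z, hzB, rfl⟩ := hAsubK σ n haA
    have hz : z ∈ Metric.closedBall (0:H) (ρB (θ (-(n:ℝ)) σ)) := hB_sub_Babs _ hzB
    have hP : eK n σ x ≤ edist (φ (n:ℝ) (θ (-(n:ℝ)) σ) z) x := by
      refine aux_ball_induction (hρB_pos _)
        (P := fun w => eK n σ x ≤ edist (φ (n:ℝ) (θ (-(n:ℝ)) σ) w) x) ?_ ?_ z hz
      · exact isClosed_le continuous_const ((hφ_cont _ _).edist continuous_const)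
      · intro k hk
        have h5 := iInf_le (fun k : ℕ => if ‖q k‖ < ρB (θ (-(n:ℝ)) σ) then
          edist (φ (n:ℝ) (θ (-(n:ℝ)) σ) (q k)) x else ⊤) k
        rwa [if_pos hk] at h5
    rw [show EMetric.infEdist x (A σ) = Metric.infEDist x (A σ) from rfl, hax, edist_comm]
    exact hP
  have hinfK_le_eK : ∀ (σ : Ω) (s : ℝ), 0 ≤ s → ∃ N : ℕ, ∀ n : ℕ, N ≤ n → ∀ x : H,
      EMetric.infEdist x (K s σ) ≤ eK n σ x := by
    intro σ s hs
    obtain ⟨N, hN⟩ := hKhat_in_K σ s hs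
    refine ⟨N, fun n hn x => ?_⟩
    refine le_iInf fun k => ?_
    by_cases hk : ‖q k‖ < ρB (θ (-(n:ℝ)) σ)
    · rw [if_pos hk]
      have hmem : φ (n:ℝ) (θ (-(n:ℝ)) σ) (q k) ∈ K s σ := by
        refine hN n hn (Set.mem_image_of_mem _ ?_)
        simpa [hBabsdef, Metric.mem_closedBall, dist_zero_right] using hk.le
      rw [edist_comm]
      exact EMetric.infEdist_le_edist_of_mem hmem
    · rw [if_neg hk]; exact le_top
  have hdA_eq : ∀ (σ : Ω) (x : H), dA σ x = EMetric.infEdist x (A σ) := by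
    intro σ x
    simp only [hdAdef]
    refine le_antisymm (iSup_le fun n => heK_le σ x n) ?_
    have h1 : ⨆ s : ℕ, EMetric.infEdist x (K (s:ℝ) σ) = EMetric.infEdist x (A σ) :=
      aux_infEdist_iInter (fun n => hKcpt _ _) (fun n => hKne _ _) (hanti σ) x
    rw [← h1]
    refine iSup_le fun s => ?_
    obtain ⟨N, hN⟩ := hinfK_le_eK σ (s:ℝ) (Nat.cast_nonneg s)
    exact le_trans (hN N le_rfl x) (le_iSup (fun n : ℕ => eK n σ x) N)
  have hdA_meas : ∀ (t c : ℝ) (v : H), Measurable fun σ => dA σ (φ t (θ c σ) v) := by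
    intro t c v
    refine Measurable.iSup fun n => Measurable.iInf fun k => ?_
    refine Measurable.ite ?_ ?_ measurable_const
    · exact measurableSet_lt measurable_const (hρB_meas.comp (hθmeas _))
    · exact Measurable.edist (hφθmeas _ _ _) (hφθmeas t c v)
  -- conclusion
  refine ⟨A, hAne, hAcpt, hA_meas, hAinv, ?_⟩
  intro D hD_bdd hD_meas ε hε
  set farD0 : Ω → ENNReal := fun ω => ⨆ x ∈ D ω, (‖x‖₊ : ENNReal) with hfarD0def
  have hfarD0_meas : Measurable farD0 := by simpa [sub_zero] using hD_meas 0
  have hfarD0_fin : ∀ ω, farD0 ω ≠ ⊤ := fun ω => by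
    simpa [sub_zero] using aux_far_fin (hD_bdd ω) (0:H)
  set ρD : Ω → ℝ := fun ω => (farD0 ω).toReal + 1 with hρDdef
  have hρD_meas : Measurable ρD :=
    (ENNReal.measurable_toReal.comp hfarD0_meas).add measurable_const
  have hρD_one : ∀ ω, 1 ≤ ρD ω := fun ω => by
    have : (0:ℝ) ≤ (farD0 ω).toReal := ENNReal.toReal_nonneg
    simp only [hρDdef]; linarith
  rw [ENNReal.tendsto_nhds_zero]
  intro η hη
  -- choose the truncation level m
  have hSm : Tendsto (fun m : ℕ => ℙ {ω | (m:ℝ) + 1 < ρD ω}) atTop (nhds 0) := by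
    have hmeasSm : ∀ m : ℕ, MeasurableSet {ω | (m:ℝ) + 1 < ρD ω} := fun m =>
      measurableSet_lt measurable_const hρD_meas
    have hanti2 : Antitone fun m : ℕ => {ω | (m:ℝ)+1 < ρD ω} := by
      intro a b hab ω hω
      simp only [Set.mem_setOf_eq] at hω ⊢
      have : (a:ℝ) ≤ (b:ℝ) := Nat.cast_le.mpr hab
      linarith
    have hempty : ⋂ m : ℕ, {ω | (m:ℝ)+1 < ρD ω} = (∅ : Set Ω) := by
      ext ω
      simp only [Set.mem_iInter, Set.mem_setOf_eq, Set.mem_empty_iff_false, iff_false,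
        not_forall, not_lt]
      obtain ⟨k, hk⟩ := exists_nat_ge (ρD ω)
      exact ⟨k, by linarith⟩
    have h7 := MeasureTheory.tendsto_measure_iInter_atTop
      (fun m => (hmeasSm m).nullMeasurableSet) hanti2 ⟨0, measure_ne_top ℙ _⟩
    rw [hempty] at h7
    simpa [Function.comp_def] using h7
  obtain ⟨m, hmb⟩ := (ENNReal.tendsto_nhds_zero.mp hSm (η/2)
    (ENNReal.half_pos hη.ne')).exists
  -- the truncated ball family Dm
  set Rm : Ω → ℝ := fun ω => min (ρD ω) ((m:ℝ)+1) with hRmdef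
  have hRm_meas : Measurable Rm := hρD_meas.min measurable_const
  have hRm_pos : ∀ ω, 0 < Rm ω := fun ω =>
    lt_min (by linarith [hρD_one ω]) (by positivity)
  set Dm : Ω → Set H := fun ω => Metric.closedBall (0:H) (Rm ω) with hDmdef
  have hDm_bdd : ∀ ω, Bornology.IsBounded (Dm ω) := fun ω => Metric.isBounded_closedBall
  have hDm_meas : ∀ y : H, Measurable fun ω => ⨆ x ∈ Dm ω, (‖x - y‖₊ : ENNReal) := by
    intro y
    have heq : (fun ω => ⨆ x ∈ Dm ω, (‖x - y‖₊ : ENNReal))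
        = fun ω => ⨆ k : ℕ, if ‖q k‖ < Rm ω then (‖q k - y‖₊ : ENNReal) else 0 := by
      funext ω
      exact aux_farBall_eq (hRm_pos ω) y
    rw [heq]
    refine Measurable.iSup fun k => Measurable.ite ?_ measurable_const measurable_const
    exact measurableSet_lt measurable_const hRm_meas
  have hDm_subexp : ∀ᵐ ω ∂ℙ, ∀ ε' : ℝ, 0 < ε' → ∃ M : ℝ, 0 < M ∧
      ∀ t : ℝ, M ≤ |t| → ∀ x ∈ Dm (θ t ω), ‖x‖ ≤ Real.exp (ε' * |t|) := by
    refine Filter.Eventually.of_forall fun ω => ?_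
    intro ε' hε'
    refine ⟨max 1 (((m:ℝ)+1)/ε'), lt_max_of_lt_left one_pos, ?_⟩
    intro t ht x hx
    have h1 : ‖x‖ ≤ (m:ℝ)+1 := by
      have h0 : ‖x‖ ≤ Rm (θ t ω) := by
        simpa [hDmdef, Metric.mem_closedBall, dist_zero_right] using hx
      exact le_trans h0 (min_le_right _ _)
    have h2 : ((m:ℝ)+1)/ε' ≤ |t| := le_trans (le_max_right _ _) ht
    have h3 : (m:ℝ)+1 ≤ ε' * |t| := by
      rw [div_le_iff₀ hε'] at h2
      linarith
    have h4 := Real.add_one_le_exp (ε' * |t|)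
    linarith
  have habsD := hB_absorb Dm hDm_bdd hDm_meas hDm_subexp
  -- the measurable dominating functions gm
  set gm : ℝ → Ω → ENNReal := fun t σ => ⨆ k : ℕ,
      if ‖q k‖ < Rm (θ (-t) σ) then dA σ (φ t (θ (-t) σ) (q k)) else 0 with hgmdef
  have hgm_meas : ∀ t, Measurable (gm t) := fun t =>
    Measurable.iSup fun k => Measurable.ite
      (measurableSet_lt measurable_const (hRm_meas.comp (hθmeas _)))
      (hdA_meas t (-t) (q k)) measurable_const
  -- pointwise convergence of gm to 0
  have hgm_tendsto : ∀ σ, Tendsto (fun t => gm t σ) atTop (nhds 0) := by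
    intro σ
    rw [ENNReal.tendsto_nhds_zero]
    intro δ hδ
    obtain ⟨s, hs⟩ := aux_unif (K := fun n : ℕ => K (n:ℝ) σ)
      (fun n => hKcpt _ _) (fun n => hKne _ _) (hanti σ) hδ
    obtain ⟨t₀, ht₀pos, ht₀⟩ := habsD (θ (-(s:ℝ)) σ)
    rw [eventually_atTop]
    refine ⟨(s:ℝ) + t₀, fun t ht => ?_⟩
    refine iSup_le fun k => ?_
    by_cases hk : ‖q k‖ < Rm (θ (-t) σ)
    · rw [if_pos hk]
      have hu0 : (0:ℝ) ≤ t - s := by linarith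
      have hut : t₀ ≤ t - s := by linarith
      have habs2 := (ht₀ (t - s) hut).2
      rw [hθθ, show -(t-(s:ℝ)) + -(s:ℝ) = -((s:ℝ)+(t-(s:ℝ))) by ring] at habs2
      have h4 := key (s:ℝ) (t-(s:ℝ)) (Nat.cast_nonneg s) hu0 σ
        (Dm (θ (-((s:ℝ)+(t-(s:ℝ)))) σ)) habs2
      rw [show (s:ℝ) + (t - (s:ℝ)) = t by ring] at h4
      have hmem : φ t (θ (-t) σ) (q k) ∈ K (s:ℝ) σ := by
        refine h4 (Set.mem_image_of_mem _ ?_)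
        simpa [hDmdef, Metric.mem_closedBall, dist_zero_right] using hk.le
      rw [hdA_eq]
      exact hs _ hmem
    · rw [if_neg hk]; exact zero_le
  -- the measure of the dominating events tends to 0
  set c : ENNReal := ENNReal.ofReal ε with hcdef
  have hc_pos : 0 < c := ENNReal.ofReal_pos.mpr hε
  have hPbad : Tendsto (fun t => ℙ {σ | c ≤ gm t σ}) atTop (nhds 0) := by
    rw [tendsto_iff_seq_tendsto]
    intro u hu
    have hmeaset : ∀ i, MeasurableSet {σ | c ≤ gm (u i) σ} := fun i =>
      measurableSet_le measurable_const (hgm_meas (u i))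
    have h6 : Tendsto (fun i => ∫⁻ σ, Set.indicator {σ | c ≤ gm (u i) σ}
        (1 : Ω → ENNReal) σ ∂ℙ) atTop (nhds (∫⁻ _, (0:ENNReal) ∂ℙ)) := by
      refine tendsto_lintegral_of_dominated_convergence (fun _ => 1)
        (fun i => measurable_one.indicator (hmeaset i)) ?_ ?_ ?_
      · refine fun i => Eventually.of_forall fun σ => ?_
        classical
        by_cases h : σ ∈ {σ | c ≤ gm (u i) σ}
        · simp [Set.indicator_of_mem h]
        · simp [Set.indicator_of_notMem h]
      · rw [lintegral_one, measure_univ]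
        exact ENNReal.one_ne_top
      · refine Eventually.of_forall fun σ => ?_
        have h7 : ∀ᶠ i in atTop, gm (u i) σ < c := by
          have h8 : Tendsto (fun i => gm (u i) σ) atTop (nhds 0) :=
            (hgm_tendsto σ).comp hu
          exact h8.eventually_lt_const hc_pos
        refine Tendsto.congr' ?_ tendsto_const_nhds
        filter_upwards [h7] with i hi
        simp [Set.indicator_apply, Set.mem_setOf_eq, not_le.mpr hi]
    rw [lintegral_zero] at h6
    have heqP : ∀ i, ∫⁻ σ, Set.indicator {σ | c ≤ gm (u i) σ} (1 : Ω → ENNReal) σ ∂ℙ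
        = ℙ {σ | c ≤ gm (u i) σ} := fun i => lintegral_indicator_one (hmeaset i)
    exact (h6.congr heqP : _)
  -- the key inclusion of the bad event
  have hincl : ∀ t : ℝ, {ω : Ω | ε ≤ distH (φ t ω '' D ω) (A (θ t ω))} ⊆
      {ω | (m:ℝ)+1 < ρD ω} ∪ θ t ⁻¹' {σ | c ≤ gm t σ} := by
    intro t ω hω
    by_cases hρ : (m:ℝ)+1 < ρD ω
    · exact Or.inl hρ
    refine Or.inr ?_
    push_neg at hρ
    simp only [Set.mem_preimage, Set.mem_setOf_eq]
    by_contra hg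
    push_neg at hg
    have hθback : θ (-t) (θ t ω) = ω := by
      rw [hθθ, show -t + t = 0 by ring]
      exact hθ0 ω
    have hDsub : D ω ⊆ Metric.closedBall (0:H) (Rm ω) := by
      intro x hx
      have h1 : (‖x‖₊ : ENNReal) ≤ farD0 ω :=
        le_iSup₂ (f := fun x (_ : x ∈ D ω) => (‖x‖₊ : ENNReal)) x hx
      have h2 : ‖x‖ ≤ (farD0 ω).toReal := by
        simpa using ENNReal.toReal_mono (hfarD0_fin ω) h1
      have h3 : ‖x‖ ≤ Rm ω := by
        refine le_min ?_ ?_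
        · simp only [hρDdef]; linarith
        · simp only [hρDdef] at hρ; linarith
      simpa [Metric.mem_closedBall, dist_zero_right] using h3
    have hclose : ∀ x ∈ φ t ω '' D ω,
        EMetric.infEdist x (A (θ t ω)) ≤ gm t (θ t ω) := by
      rintro - ⟨z, hz, rfl⟩
      have hz' : z ∈ Metric.closedBall (0:H) (Rm (θ (-t) (θ t ω))) := by
        rw [hθback]; exact hDsub hz
      have hPz := aux_ball_induction
        (R := Rm (θ (-t) (θ t ω))) (by rw [hθback]; exact hRm_pos ω)
        (P := fun w => EMetric.infEdist (φ t (θ (-t) (θ t ω)) w) (A (θ t ω))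
          ≤ gm t (θ t ω)) ?_ ?_ z hz'
      · rw [hθback] at hPz
        exact hPz
      · exact isClosed_le (EMetric.continuous_infEdist.comp (hφ_cont _ _)) continuous_const
      · intro k hk
        have h5 := le_iSup (fun k : ℕ => if ‖q k‖ < Rm (θ (-t) (θ t ω)) then
          dA (θ t ω) (φ t (θ (-t) (θ t ω)) (q k)) else 0) k
        rw [if_pos hk] at h5
        rw [← hdA_eq]
        exact h5
    have hfin : gm t (θ t ω) ≠ ⊤ := (hg.trans_le le_top).ne
    have hlt : (gm t (θ t ω)).toReal < ε := ENNReal.toReal_lt_of_lt_ofReal hg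
    have hbound : ∀ r ∈ (fun x => sInf ((fun y => ‖x - y‖) '' (A (θ t ω)))) ''
        (φ t ω '' D ω), r ≤ (gm t (θ t ω)).toReal := by
      rintro - ⟨x, hx, rfl⟩
      dsimp only
      rw [aux_sInf_image]
      have h8 : EMetric.infEdist x (A (θ t ω)) ≤ gm t (θ t ω) := hclose x hx
      have h9 : Metric.infDist x (A (θ t ω))
          = (EMetric.infEdist x (A (θ t ω))).toReal := rfl
      rw [h9]
      exact ENNReal.toReal_mono hfin h8
    have hdist : distH (φ t ω '' D ω) (A (θ t ω)) < ε := by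
      rw [hdistH]
      rcases Set.eq_empty_or_nonempty ((fun x => sInf ((fun y => ‖x - y‖) ''
          (A (θ t ω)))) '' (φ t ω '' D ω)) with hS | hS
      · rw [hS, Real.sSup_empty]; exact hε
      · exact lt_of_le_of_lt (csSup_le hS hbound) hlt
    have hω' : ε ≤ distH (φ t ω '' D ω) (A (θ t ω)) := hω
    linarith
  -- final assembly
  have hev : ∀ᶠ t in atTop, ℙ {σ | c ≤ gm t σ} ≤ η/2 :=
    ENNReal.tendsto_nhds_zero.mp hPbad (η/2) (ENNReal.half_pos hη.ne')
  filter_upwards [hev] with t ht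
  calc ℙ {ω | ε ≤ distH (φ t ω '' D ω) (A (θ t ω))}
      ≤ ℙ ({ω | (m:ℝ)+1 < ρD ω} ∪ θ t ⁻¹' {σ | c ≤ gm t σ}) := measure_mono (hincl t)
    _ ≤ ℙ {ω | (m:ℝ)+1 < ρD ω} + ℙ (θ t ⁻¹' {σ | c ≤ gm t σ}) := measure_union_le _ _
    _ = ℙ {ω | (m:ℝ)+1 < ρD ω} + ℙ {σ | c ≤ gm t σ} := by
        rw [(hθ_mp t).measure_preimage
          (measurableSet_le measurable_const (hgm_meas t)).nullMeasurableSet]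
    _ ≤ η/2 + η/2 := add_le_add hmb ht
    _ = η := ENNReal.add_halves η
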